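/- Robust lower-bound quadratic constraint as a linear matrix inequality (the Φ/Ψ-type block used in Lemma 1). Let n ≥ 1, let A and Q be n×n complex Hermitian matrices, let ĥ ∈ ℂⁿ, and let t ∈ ℝ. Then the infinite family of constraints (for every e ∈ ℂⁿ with eᴴQe ≤ 1, one has (ĥ + e)ᴴ A (ĥ + e) ≥ t) holds if and only if there exists λ ≥ 0 such that the (n+1)×(n+1) Hermitian block matrix [[A + λQ, Aĥ], [(Aĥ)ᴴ, ĥᴴAĥ − t − λ]] is positive semidefinite. (No extra hypothesis on Q is needed: the point e = 0 satisfies the constraint 0 ≤ 1 strictly, so the Slater condition for the S-lemma is automatic.) -/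

import Mathlib

/-!
Write vectors of `ℂⁿ ⊕ ℂ` as `(e, c)`. Homogenizing, the robust constraint becomes the implication
`c̄c - eᴴQe ≥ 0 → (cĥ + e)ᴴA(cĥ + e) - t c̄c ≥ 0` between two Hermitian forms `G` and `F` on
`ℂⁿ⁺¹` (for `c = 0` by letting `c ↓ 0`), and the matrix of the LMI is exactly `F - λG`. Since
`G (0, 1) = 1 > 0`, the S-lemma turns the implication into `∃ λ ≥ 0, F - λG ⪰ 0`.

The S-lemma comes from separating the open quadrant `{F < 0 < G}` by a line from the joint range of
`(F, G)`, which is a convex cone by Dines' theorem: for a unimodular `w` aligning the cross terms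
with `q - p`, the forms at `√(1 - s) x + √s w y` trace a continuous path on the line through
`p = (F x, G x)` and `q = (F y, G y)` from `p` to `q`.
-/

open Matrix ComplexOrder

/-- The `(n+1) × (n+1)` Hermitian block matrix `[[A, v], [vᴴ, s]]` built from an
`n × n` block `A`, a column vector `v`, its conjugate-transposed row, and a real scalar `s`. -/
noncomputable def hermBlock {n : ℕ} (A : Matrix (Fin n) (Fin n) ℂ) (v : Fin n → ℂ) (s : ℝ) :
    Matrix (Fin n ⊕ Unit) (Fin n ⊕ Unit) ℂ :=
  Matrix.fromBlocks A (Matrix.of fun i (_ : Unit) => v i)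
    (Matrix.of fun (_ : Unit) j => star (v j))
    (Matrix.of fun (_ : Unit) (_ : Unit) => (s : ℂ))

theorem forall_sumElim_unit_iff {α β : Type*} {P : (α ⊕ Unit → β) → Prop} :
    (∀ y, P y) ↔ ∀ e c, P (Sum.elim e fun _ => c) :=
  ⟨fun h _ _ => h _, fun h y => Sum.elim_comp_inl_inr y ▸ h (y ∘ Sum.inl) (y (Sum.inr ()))⟩

theorem nonneg_of_forall_pos_le_mul {u v : ℝ} (h : ∀ r > 0, u ≤ r * v) : 0 ≤ v := by
  refine le_of_tendsto ((tendsto_const_nhds (x := u)).div_atTop Filter.tendsto_id) ?_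
  filter_upwards [Filter.eventually_gt_atTop 0] with r hr
  exact (div_le_iff₀ hr).2 ((h r hr).trans_eq (mul_comm r v))

theorem Complex.exists_normSq_eq_one_re_mul_eq_smul (a b : ℂ) {d : ℝ × ℝ} (hd : d ≠ 0) :
    ∃ w : ℂ, Complex.normSq w = 1 ∧ ∃ c : ℝ, ((w * a).re, (w * b).re) = c • d := by
  let L : ℂ →ₗ[ℝ] ℝ × ℝ := (Complex.reLm ∘ₗ LinearMap.mulRight ℝ a).prod
    (Complex.reLm ∘ₗ LinearMap.mulRight ℝ b)
  suffices ∃ w ≠ 0, ∃ c : ℝ, L w = c • d by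
    obtain ⟨w, hw, c, hc⟩ := this
    refine ⟨(‖w‖⁻¹ : ℝ) • w, ?_, ‖w‖⁻¹ * c, ?_⟩
    · rw [Complex.normSq_eq_norm_sq, norm_smul, norm_inv, norm_norm,
        inv_mul_cancel₀ (norm_ne_zero_iff.2 hw), one_pow]
    · rw [mul_smul, ← hc, ← map_smul]
      rfl
  by_cases hL : Function.Injective L
  · have hsurj := (LinearMap.injective_iff_surjective_of_finrank_eq_finrank (by simp)).1 hL
    obtain ⟨w, hw⟩ := hsurj d
    refine ⟨w, ?_, 1, by rw [hw, one_smul]⟩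
    rintro rfl
    exact hd (hw.symm.trans (map_zero L))
  · rw [injective_iff_map_eq_zero] at hL
    push Not at hL
    obtain ⟨w, hw, hw0⟩ := hL
    exact ⟨w, hw0, 0, by rw [hw, zero_smul]⟩

theorem exists_nonneg_mul_snd_le_fst_of_disjoint {W : Set (ℝ × ℝ)} (hW : Convex ℝ W)
    (hcone : ∀ p ∈ W, ∀ r : ℝ, 0 ≤ r → r • p ∈ W) {p₀ : ℝ × ℝ} (hp₀ : p₀ ∈ W)
    (hp₀' : 0 < p₀.2) (hdisj : Disjoint (Set.Iio 0 ×ˢ Set.Ioi 0) W) :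
    ∃ lam : ℝ, 0 ≤ lam ∧ ∀ p ∈ W, lam * p.2 ≤ p.1 := by
  obtain ⟨f, u, hfK, hfW⟩ := geometric_hahn_banach_open ((convex_Iio 0).prod (convex_Ioi 0))
    (isOpen_Iio.prod isOpen_Ioi) hW hdisj
  set α := f (1, 0)
  set β := f (0, 1)
  have hf : ∀ p : ℝ × ℝ, f p = p.1 * α + p.2 * β := fun p => by
    conv_lhs => rw [show p = p.1 • ((1 : ℝ), (0 : ℝ)) + p.2 • ((0 : ℝ), (1 : ℝ)) by ext <;> simp]
    rw [map_add, map_smul, map_smul, smul_eq_mul, smul_eq_mul]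
  have hu : u ≤ 0 := by simpa using hfW 0 (by simpa using hcone p₀ hp₀ 0 le_rfl)
  have hfK' : ∀ p ∈ Set.Iic 0 ×ˢ Set.Ici 0, f p ≤ 0 := by
    rw [← closure_Iio, ← closure_Ioi, ← closure_prod_eq]
    exact closure_minimal (fun p hp => ((hfK p hp).trans_le hu).le)
      (isClosed_le f.continuous continuous_const)
  have hα : 0 ≤ α := by simpa [hf] using hfK' (-1, 0) (by simp)
  have hβ : β ≤ 0 := by simpa [hf] using hfK' (0, 1) (by simp)
  have hβα : β < α := by
    have := (hfK (-1, 1) (by simp)).trans_le hu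
    rw [hf] at this
    linarith
  have hfW' : ∀ p ∈ W, 0 ≤ p.1 * α + p.2 * β := fun p hp => by
    refine nonneg_of_forall_pos_le_mul (u := u) fun r hr => ?_
    have := hfW _ (hcone p hp r hr.le)
    rw [hf, Prod.smul_fst, Prod.smul_snd, smul_eq_mul, smul_eq_mul] at this
    linarith
  -- `α = 0` would force `β < 0`, which `p₀` rules out
  have hα' : 0 < α := by
    refine hα.lt_of_ne fun h => ?_
    have := hfW' p₀ hp₀
    rw [← h] at this hβα
    nlinarith
  refine ⟨-β / α, div_nonneg (neg_nonneg.2 hβ) hα'.le, fun p hp => ?_⟩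
  rw [div_mul_eq_mul_div, div_le_iff₀ hα']
  linarith [hfW' p hp]

namespace Matrix

open Complex

variable {m : Type*} [Fintype m]

noncomputable def hermForm (M : Matrix m m ℂ) (x : m → ℂ) : ℝ := (star x ⬝ᵥ M *ᵥ x).re

theorem continuous_hermForm (M : Matrix m m ℂ) : Continuous M.hermForm := by
  unfold hermForm; fun_prop

theorem hermForm_smul (M : Matrix m m ℂ) (c : ℂ) (x : m → ℂ) :
    M.hermForm (c • x) = normSq c * M.hermForm x := by
  rw [hermForm, hermForm, star_smul, mulVec_smul, smul_dotProduct, dotProduct_smul, smul_eq_mul,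
    smul_eq_mul, ← mul_assoc, star_def, mul_comm _ c, mul_conj, re_ofReal_mul]

theorem hermForm_sub_smul (A B : Matrix m m ℂ) (r : ℝ) (x : m → ℂ) :
    (A - r • B).hermForm x = A.hermForm x - r * B.hermForm x := by
  rw [hermForm, sub_mulVec, smul_mulVec, dotProduct_sub, dotProduct_smul, sub_re, real_smul,
    re_ofReal_mul, hermForm, hermForm]

theorem hermForm_neg (M : Matrix m m ℂ) (x : m → ℂ) : (-M).hermForm x = -M.hermForm x := by
  rw [hermForm, neg_mulVec, dotProduct_neg, neg_re, hermForm]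

variable {M : Matrix m m ℂ}

theorem IsHermitian.star_dotProduct_mulVec_swap (hM : M.IsHermitian) (x y : m → ℂ) :
    star y ⬝ᵥ M *ᵥ x = star (star x ⬝ᵥ M *ᵥ y) := by
  rw [← star_dotProduct_star, star_star, star_mulVec, dotProduct_mulVec, hM]

theorem IsHermitian.coe_hermForm (hM : M.IsHermitian) (x : m → ℂ) :
    (M.hermForm x : ℂ) = star x ⬝ᵥ M *ᵥ x := by
  have h := congrArg im (hM.star_dotProduct_mulVec_swap x x)
  rw [star_def, conj_im] at h
  exact Complex.ext rfl (by simp only [ofReal_im]; linarith)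

theorem IsHermitian.hermForm_add (hM : M.IsHermitian) (x y : m → ℂ) :
    M.hermForm (x + y) = M.hermForm x + M.hermForm y + 2 * (star x ⬝ᵥ M *ᵥ y).re := by
  have hswap := congrArg re (hM.star_dotProduct_mulVec_swap x y)
  rw [star_def, conj_re] at hswap
  simp only [hermForm, star_add, mulVec_add, dotProduct_add, add_dotProduct, add_re, hswap]
  ring

theorem IsHermitian.hermForm_ofReal_smul_add (hM : M.IsHermitian) (α β : ℝ) {w : ℂ}
    (hw : normSq w = 1) (x y : m → ℂ) :
    M.hermForm ((α : ℂ) • x + ((β : ℂ) * w) • y) =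
      α ^ 2 * M.hermForm x + β ^ 2 * M.hermForm y + 2 * α * β * (w * (star x ⬝ᵥ M *ᵥ y)).re := by
  rw [hM.hermForm_add, hermForm_smul, hermForm_smul, star_smul, smul_dotProduct, mulVec_smul,
    dotProduct_smul, smul_eq_mul, smul_eq_mul, normSq_ofReal, normSq_mul, normSq_ofReal, hw,
    star_def, conj_ofReal, ← mul_assoc, ← mul_assoc, ← ofReal_mul, mul_assoc _ w, re_ofReal_mul]
  ring

-- Dines' theorem
theorem convex_range_hermForm_prod {F G : Matrix m m ℂ} (hF : F.IsHermitian)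
    (hG : G.IsHermitian) : Convex ℝ (Set.range fun x => (F.hermForm x, G.hermForm x)) := by
  rintro _ ⟨x, rfl⟩ _ ⟨y, rfl⟩ s₁ s₂ hs₁ hs₂ hs
  dsimp only
  set p : ℝ × ℝ := (F.hermForm x, G.hermForm x)
  set q : ℝ × ℝ := (F.hermForm y, G.hermForm y)
  by_cases hpq : q = p
  · rw [hpq, ← add_smul, hs, one_smul]
    exact Set.mem_range_self x
  obtain ⟨w, hw, c, hc⟩ := Complex.exists_normSq_eq_one_re_mul_eq_smul
    (star x ⬝ᵥ F *ᵥ y) (star x ⬝ᵥ G *ᵥ y) (sub_ne_zero.2 hpq)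
  simp only [Prod.ext_iff, Prod.smul_fst, Prod.smul_snd, Prod.fst_sub, Prod.snd_sub,
    smul_eq_mul] at hc
  -- `(F, G)` at `√(1 - s) x + √s w y` is `p + φ s • (q - p)`
  let φ : ℝ → ℝ := fun s => s + 2 * √(1 - s) * √s * c
  obtain ⟨s, ⟨hs0, hs1⟩, hφs⟩ :=
    intermediate_value_Icc zero_le_one (by fun_prop : Continuous φ).continuousOn
      (show s₂ ∈ Set.Icc (φ 0) (φ 1) by simpa [φ] using ⟨hs₂, by linarith⟩)
  refine ⟨(√(1 - s) : ℂ) • x + ((√s : ℂ) * w) • y, ?_⟩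
  dsimp only
  have hsq₁ : √(1 - s) ^ 2 = 1 - s := Real.sq_sqrt (by linarith)
  have hsq₂ : √s ^ 2 = s := Real.sq_sqrt hs0
  rw [hF.hermForm_ofReal_smul_add _ _ hw, hG.hermForm_ofReal_smul_add _ _ hw, hc.1, hc.2,
    hsq₁, hsq₂]
  simp only [φ] at hφs
  ext
  · simp only [Prod.fst_add, Prod.smul_fst, smul_eq_mul, p, q]
    linear_combination (F.hermForm y - F.hermForm x) * hφs - F.hermForm x * hs
  · simp only [Prod.snd_add, Prod.smul_snd, smul_eq_mul, p, q]
    linear_combination (G.hermForm y - G.hermForm x) * hφs - G.hermForm x * hs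

theorem smul_hermForm_prod_mem_range (F G : Matrix m m ℂ) {r : ℝ} (hr : 0 ≤ r) (x : m → ℂ) :
    r • (F.hermForm x, G.hermForm x) ∈ Set.range fun x => (F.hermForm x, G.hermForm x) := by
  refine ⟨(√r : ℂ) • x, ?_⟩
  simp only [hermForm_smul, normSq_ofReal, Real.mul_self_sqrt hr, Prod.smul_mk, smul_eq_mul]

-- The S-lemma, with Slater point `x₀`
theorem exists_nonneg_smul_hermForm_le_iff {F G : Matrix m m ℂ} (hF : F.IsHermitian)
    (hG : G.IsHermitian) {x₀ : m → ℂ} (hx₀ : 0 < G.hermForm x₀) :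
    (∃ lam : ℝ, 0 ≤ lam ∧ ∀ x, lam * G.hermForm x ≤ F.hermForm x) ↔
      ∀ x, 0 ≤ G.hermForm x → 0 ≤ F.hermForm x := by
  refine ⟨fun ⟨lam, hlam, h⟩ x hx => (mul_nonneg hlam hx).trans (h x), fun H => ?_⟩
  obtain ⟨lam, hlam, h⟩ := exists_nonneg_mul_snd_le_fst_of_disjoint
    (convex_range_hermForm_prod hF hG)
    (by rintro _ ⟨x, rfl⟩ r hr; exact smul_hermForm_prod_mem_range F G hr x)
    (Set.mem_range_self x₀) hx₀ <| by
      rw [Set.disjoint_right]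
      rintro _ ⟨x, rfl⟩ ⟨hFx, hGx⟩
      exact (H x (le_of_lt hGx)).not_gt hFx
  exact ⟨lam, hlam, fun x => h _ (Set.mem_range_self x)⟩

theorem forall_le_hermForm_add_iff (A Q : Matrix m m ℂ) (h : m → ℂ) (t : ℝ) :
    (∀ e, Q.hermForm e ≤ 1 → t ≤ A.hermForm (h + e)) ↔
      ∀ e (c : ℂ), Q.hermForm e ≤ normSq c → t * normSq c ≤ A.hermForm (c • h + e) := by
  refine ⟨fun H => ?_, fun H e he => by simpa using H e 1 (by simpa using he)⟩
  have of_ne_zero : ∀ e (c : ℂ), c ≠ 0 → Q.hermForm e ≤ normSq c →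
      t * normSq c ≤ A.hermForm (c • h + e) := by
    intro e c hc he
    have hc' : 0 < normSq c := normSq_pos.2 hc
    rw [show c • h + e = c • (h + c⁻¹ • e) by rw [smul_add, smul_inv_smul₀ hc], hermForm_smul,
      mul_comm]
    refine mul_le_mul_of_nonneg_left (H _ ?_) hc'.le
    rwa [hermForm_smul, normSq_inv, inv_mul_le_iff₀ hc', mul_one]
  intro e c he
  rcases eq_or_ne c 0 with rfl | hc
  · -- let `c = ε ↓ 0` through positive reals
    simp only [map_zero, mul_zero, zero_smul, zero_add] at he ⊢
    have hcont : Continuous fun ε : ℝ => A.hermForm ((ε : ℂ) • h + e) - t * ε ^ 2 :=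
      ((continuous_hermForm A).comp (by fun_prop)).sub (by fun_prop)
    have hlim := (hcont.tendsto 0).mono_left (nhdsWithin_le_nhds (s := Set.Ioi 0))
    simp only [ofReal_zero, zero_smul, zero_add, ne_eq, OfNat.ofNat_ne_zero, not_false_eq_true,
      zero_pow, mul_zero, sub_zero] at hlim
    refine ge_of_tendsto hlim ?_
    filter_upwards [self_mem_nhdsWithin] with ε (hε : 0 < ε)
    have := of_ne_zero e ε (ofReal_ne_zero.2 hε.ne') (he.trans (normSq_nonneg _))
    rw [normSq_ofReal, ← sq] at this
    linarith
  · exact of_ne_zero e c hc he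

theorem posSemidef_sub_smul_iff {F G : Matrix m m ℂ} (hF : F.IsHermitian) (hG : G.IsHermitian)
    (r : ℝ) : (F - r • G).PosSemidef ↔ ∀ x, r * G.hermForm x ≤ F.hermForm x := by
  have hFG : (F - r • G).IsHermitian := hF.sub (hG.smul (IsSelfAdjoint.all r))
  rw [posSemidef_iff_dotProduct_mulVec, and_iff_right hFG]
  refine forall_congr' fun x => ?_
  rw [← hFG.coe_hermForm, zero_le_real, hermForm_sub_smul, sub_nonneg]

end Matrix

section hermBlock

open Complex

variable {n : ℕ}

theorem hermBlock_isHermitian {B : Matrix (Fin n) (Fin n) ℂ} (hB : B.IsHermitian)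
    (v : Fin n → ℂ) (s : ℝ) : (hermBlock B v s).IsHermitian := by
  refine hB.fromBlocks ?_ ?_
  · ext; simp
  · ext; simp

theorem hermBlock_sub_smul (A B : Matrix (Fin n) (Fin n) ℂ) (v w : Fin n → ℂ)
    (s s' r : ℝ) :
    hermBlock A v s - r • hermBlock B w s' = hermBlock (A - r • B) (v - r • w) (s - r * s') := by
  ext (i | i) (j | j) <;> simp [hermBlock]

theorem hermForm_hermBlock (B : Matrix (Fin n) (Fin n) ℂ) (v : Fin n → ℂ) (s : ℝ)
    (e : Fin n → ℂ) (c : ℂ) :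
    (hermBlock B v s).hermForm (Sum.elim e fun _ => c) =
      B.hermForm e + 2 * (c * (star e ⬝ᵥ v)).re + s * normSq c := by
  have h₁₂ : (of fun i (_ : Unit) => v i) *ᵥ (fun _ => c) = c • v := by
    ext; simp [mulVec, dotProduct, mul_comm]
  have h₂₁ : (of fun (_ : Unit) j => star (v j)) *ᵥ e = fun _ => star (star e ⬝ᵥ v) := by
    ext; exact star_dotProduct v e
  have h₂₂ : (of fun (_ : Unit) (_ : Unit) => (s : ℂ)) *ᵥ (fun _ => c) = fun _ => s * c := by
    ext; simp [mulVec, dotProduct]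
  simp only [hermForm, hermBlock, fromBlocks_mulVec, Function.star_sumElim,
    sumElim_dotProduct_sumElim, Sum.elim_comp_inl, Sum.elim_comp_inr, h₁₂, h₂₁, h₂₂]
  rw [dotProduct_add, dotProduct_smul, smul_eq_mul]
  generalize star e ⬝ᵥ v = T
  simp [dotProduct, normSq_apply]
  ring

theorem hermForm_hermBlock_mulVec {A : Matrix (Fin n) (Fin n) ℂ} (hA : A.IsHermitian)
    (h : Fin n → ℂ) (t : ℝ) (e : Fin n → ℂ) (c : ℂ) :
    (hermBlock A (A *ᵥ h) (A.hermForm h - t)).hermForm (Sum.elim e fun _ => c) =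
      A.hermForm (c • h + e) - t * normSq c := by
  rw [hermForm_hermBlock, hA.hermForm_add, hermForm_smul, star_smul, smul_dotProduct,
    smul_eq_mul, hA.star_dotProduct_mulVec_swap h e]
  simp only [mul_re, star_def, conj_re, conj_im]
  ring

theorem hermForm_hermBlock_neg_zero_one (Q : Matrix (Fin n) (Fin n) ℂ) (e : Fin n → ℂ)
    (c : ℂ) :
    (hermBlock (-Q) 0 1).hermForm (Sum.elim e fun _ => c) = normSq c - Q.hermForm e := by
  rw [hermForm_hermBlock, hermForm_neg, dotProduct_zero, mul_zero, zero_re, mul_zero, add_zero,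
    one_mul, neg_add_eq_sub]

end hermBlock


theorem robust_lower_bound_lmi_general {n : ℕ}
    (A Q : Matrix (Fin n) (Fin n) ℂ) (hA : A.IsHermitian) (hQ : Q.IsHermitian)
    (hhat : Fin n → ℂ) (t : ℝ) :
    (∀ e : Fin n → ℂ, (star e ⬝ᵥ Q.mulVec e).re ≤ 1 →
        t ≤ (star (hhat + e) ⬝ᵥ A.mulVec (hhat + e)).re) ↔
      ∃ lam : ℝ, 0 ≤ lam ∧
        (hermBlock (A + lam • Q) (A.mulVec hhat)
          ((star hhat ⬝ᵥ A.mulVec hhat).re - t - lam)).PosSemidef := by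
  set F := hermBlock A (A *ᵥ hhat) (A.hermForm hhat - t)
  set G := hermBlock (-Q) 0 1
  have hF : F.IsHermitian := hermBlock_isHermitian hA _ _
  have hG : G.IsHermitian := hermBlock_isHermitian hQ.neg _ _
  have hslater : 0 < G.hermForm (Sum.elim 0 fun _ => 1) := by
    rw [hermForm_hermBlock_neg_zero_one]
    simp [hermForm]
  calc _ ↔ ∀ e (c : ℂ), Q.hermForm e ≤ Complex.normSq c →
        t * Complex.normSq c ≤ A.hermForm (c • hhat + e) :=
        forall_le_hermForm_add_iff A Q hhat t
    _ ↔ ∀ y, 0 ≤ G.hermForm y → 0 ≤ F.hermForm y := by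
        simp only [forall_sumElim_unit_iff, F, G, hermForm_hermBlock_mulVec hA,
          hermForm_hermBlock_neg_zero_one, sub_nonneg]
    _ ↔ ∃ lam : ℝ, 0 ≤ lam ∧ ∀ y, lam * G.hermForm y ≤ F.hermForm y :=
        (exists_nonneg_smul_hermForm_le_iff hF hG hslater).symm
    _ ↔ _ := exists_congr fun lam => and_congr_right fun _ => by
        rw [← posSemidef_sub_smul_iff hF hG, hermBlock_sub_smul, smul_neg, sub_neg_eq_add,
          smul_zero, sub_zero, mul_one]
        rfl

/-- Robust lower-bound quadratic constraint as an LMI (the Φ/Ψ-type block of Lemma 1):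
`(ĥ + e)ᴴ A (ĥ + e) ≥ t` for all errors `e` with `eᴴQe ≤ 1` iff there is `λ ≥ 0` such that
`[[A + λQ, Aĥ], [(Aĥ)ᴴ, ĥᴴAĥ − t − λ]] ⪰ 0`. -/
theorem robust_lower_bound_lmi {n : ℕ} (hn : 1 ≤ n)
    (A Q : Matrix (Fin n) (Fin n) ℂ) (hA : A.IsHermitian) (hQ : Q.IsHermitian)
    (hhat : Fin n → ℂ) (t : ℝ) :
    (∀ e : Fin n → ℂ, (star e ⬝ᵥ Q.mulVec e).re ≤ 1 →
        t ≤ (star (hhat + e) ⬝ᵥ A.mulVec (hhat + e)).re) ↔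
      ∃ lam : ℝ, 0 ≤ lam ∧
        (hermBlock (A + lam • Q) (A.mulVec hhat)
          ((star hhat ⬝ᵥ A.mulVec hhat).re - t - lam)).PosSemidef :=
  robust_lower_bound_lmi_general A Q hA hQ hhat t
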